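/- Let E_1, …, E_C be positive semidefinite D×D complex matrices with Σ_i E_i = I and E_i = E_iᵀ for each i (so each E_i is real symmetric). Then there exist an integer D' ≥ D and projections Q_1, …, Q_C on ℂ^{D'} such that: each Q_i satisfies Q_i = Q_i† = Q_iᵀ (real symmetric), Q_i Q_j = 0 for i ≠ j, Σ_i Q_i = I_{D'}, and for all indices a, b ≤ D (with ℂ^D embedded as the first D coordinates of ℂ^{D'}), the (a,b) entry of Q_i equals the (a,b) entry of E_i. -/

import Mathlib

open scoped Matrix ComplexOrder

/-!
Write each `E i` as `Bᵢᵀ Bᵢ` with `Bᵢ` real (the positive square root of a real symmetric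
matrix is real symmetric) and stack the `Bᵢ` into one real matrix `V` with `C * D` rows. Then
`Vᵀ V = ∑ Bᵢᵀ Bᵢ = 1`, so the columns of `V` are orthonormal and extend to an orthogonal matrix
`W`. Conjugating the coordinate projections `Pᵢ` onto the row blocks by `W` gives real
orthogonal projections `Wᵀ Pᵢ W` summing to `1`, whose corner on the first `D` coordinates is
`Vᵀ Pᵢ V = Bᵢᵀ Bᵢ = E i`.
-/

namespace Matrix

variable {ι κ m n N R 𝕜 : Type*} [Fintype ι]

structure IsPVM [Ring R] [StarRing R] [Fintype n] [DecidableEq n] (Q : ι → Matrix n n R) :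
    Prop where
  conjTranspose_eq : ∀ i, (Q i)ᴴ = Q i
  mul_self : ∀ i, Q i * Q i = Q i
  mul_eq_zero : ∀ i j, i ≠ j → Q i * Q j = 0
  sum_eq_one : ∑ i, Q i = 1

section Ring

variable [Ring R] [StarRing R] [Fintype n] [DecidableEq n]

theorem IsPVM.conj [Fintype κ] [DecidableEq κ] {P : ι → Matrix κ κ R} (hP : IsPVM P)
    {W : Matrix κ n R} (hWW : Wᴴ * W = 1) (hWW' : W * Wᴴ = 1) :
    IsPVM fun i => Wᴴ * P i * W := by
  have conj_mul (i j : ι) : Wᴴ * P i * W * (Wᴴ * P j * W) = Wᴴ * (P i * P j) * W := by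
    simp only [Matrix.mul_assoc, ← Matrix.mul_assoc W, hWW', Matrix.one_mul]
  refine ⟨fun i => ?_, fun i => ?_, fun i j hij => ?_, ?_⟩
  · simp only [conjTranspose_mul, conjTranspose_conjTranspose, hP.conjTranspose_eq,
      Matrix.mul_assoc]
  · rw [conj_mul, hP.mul_self]
  · rw [conj_mul, hP.mul_eq_zero i j hij, Matrix.mul_zero, Matrix.zero_mul]
  · rw [← Matrix.sum_mul, ← Matrix.mul_sum, hP.sum_eq_one, Matrix.mul_one, hWW]

theorem IsPVM.map {S : Type*} [Ring S] [StarRing S] {Q : ι → Matrix n n R} (hQ : IsPVM Q)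
    (f : R →+* S) (hf : Function.Semiconj f star star) :
    IsPVM fun i => (Q i).map f := by
  refine ⟨fun i => ?_, fun i => ?_, fun i j hij => ?_, ?_⟩
  · rw [← conjTranspose_map f hf, hQ.conjTranspose_eq]
  · rw [← Matrix.map_mul, hQ.mul_self]
  · rw [← Matrix.map_mul, hQ.mul_eq_zero i j hij, Matrix.map_zero f f.map_zero]
  · simp only [← f.mapMatrix_apply, ← map_sum, hQ.sum_eq_one, map_one]

end Ring

section Block

variable [DecidableEq ι] [Fintype m] [DecidableEq m] [Ring R] [StarRing R]

def blockProj (i : ι) : Matrix (ι × m) (ι × m) R :=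
  diagonal fun s => if s.1 = i then 1 else 0

theorem isPVM_blockProj : IsPVM (blockProj (ι := ι) (m := m) (R := R)) := by
  refine ⟨fun i => ?_, fun i => ?_, fun i j hij => ?_, ?_⟩
  · simp [blockProj, diagonal_conjTranspose, apply_ite star]
  · simp only [blockProj, diagonal_mul_diagonal, ite_mul, one_mul, zero_mul]
    congr! 2; split_ifs <;> rfl
  · simp only [blockProj, diagonal_mul_diagonal, ← diagonal_zero]
    congr 1; ext s; split_ifs <;> simp_all
  · ext s t
    simp [blockProj, sum_apply, diagonal_apply, one_apply]

def stack (B : ι → Matrix m n R) : Matrix (ι × m) n R :=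
  of fun s a => B s.1 s.2 a

theorem conjTranspose_stack_mul_blockProj_mul_stack (B : ι → Matrix m n R) (i : ι) :
    (stack B)ᴴ * (blockProj i : Matrix (ι × m) (ι × m) R) * stack B = (B i)ᴴ * B i := by
  ext a b
  rw [mul_apply]
  simp only [blockProj, mul_diagonal]
  simp [stack, mul_apply, Fintype.sum_prod_type]

theorem conjTranspose_stack_mul_stack (B : ι → Matrix m n R) :
    (stack B)ᴴ * stack B = ∑ i, (B i)ᴴ * B i := by
  simp_rw [← conjTranspose_stack_mul_blockProj_mul_stack, ← Matrix.sum_mul, ← Matrix.mul_sum,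
    isPVM_blockProj.sum_eq_one, Matrix.mul_one]

end Block

theorem orthonormal_col_of_conjTranspose_mul_self_eq_one [RCLike 𝕜] [Fintype κ]
    [DecidableEq n] {V : Matrix κ n 𝕜} (hV : Vᴴ * V = 1) :
    Orthonormal 𝕜 fun a => WithLp.toLp 2 (V.col a) := by
  rw [orthonormal_iff_ite]
  intro a b
  rw [← one_apply, ← hV]
  simp [PiLp.inner_apply, mul_apply, mul_comm]

theorem exists_submatrix_eq_of_conjTranspose_mul_self_eq_one [RCLike 𝕜]
    [Fintype κ] [DecidableEq κ] [DecidableEq n] [Fintype N] [DecidableEq N]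
    {V : Matrix κ n 𝕜} (hV : Vᴴ * V = 1) {f : n → N} (hf : Function.Injective f)
    (hcard : Fintype.card N = Fintype.card κ) :
    ∃ W : Matrix κ N 𝕜, Wᴴ * W = 1 ∧ W * Wᴴ = 1 ∧ W.submatrix id f = V := by
  let col : n → EuclideanSpace 𝕜 κ := fun a => WithLp.toLp 2 (V.col a)
  let v : N → EuclideanSpace 𝕜 κ := Function.extend f col 0
  have hv : Orthonormal 𝕜 ((Set.range f).domRestrict v) := by
    have : (Set.range f).domRestrict v = col ∘ (Equiv.ofInjective f hf).symm := by
      ext ⟨_, a, rfl⟩ : 1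
      simp [v, Set.domRestrict, hf.extend_apply]
    rw [this]
    exact (orthonormal_col_of_conjTranspose_mul_self_eq_one hV).comp _
      (Equiv.ofInjective f hf).symm.injective
  obtain ⟨b, hb⟩ := hv.exists_orthonormalBasis_extension_of_card_eq (by simpa using hcard.symm)
  refine ⟨(EuclideanSpace.basisFun κ 𝕜).toBasis.toMatrix b, by simp, by simp, ?_⟩
  ext s a
  simp [Module.Basis.toMatrix_apply, hb (f a) ⟨a, rfl⟩, v, hf.extend_apply, col]

theorem card_le_card_of_conjTranspose_mul_self_eq_one [CommRing R] [StarRing R]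
    [StrongRankCondition R] [Fintype κ] [Fintype n] [DecidableEq n] {V : Matrix κ n R}
    (hV : Vᴴ * V = 1) : Fintype.card n ≤ Fintype.card κ := by
  calc Fintype.card n = (Vᴴ * V).rank := by rw [hV, rank_one]
    _ ≤ V.rank := rank_mul_le_right _ _
    _ ≤ Fintype.card κ := rank_le_card_height V

theorem exists_isPVM_submatrix_eq [RCLike 𝕜] [DecidableEq ι] [Fintype m]
    [DecidableEq m] [DecidableEq n] [Fintype N] [DecidableEq N] (B : ι → Matrix m n 𝕜)
    (hB : ∑ i, (B i)ᴴ * B i = 1) {f : n → N} (hf : Function.Injective f)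
    (hcard : Fintype.card N = Fintype.card (ι × m)) :
    ∃ Q : ι → Matrix N N 𝕜, IsPVM Q ∧ ∀ i, (Q i).submatrix f f = (B i)ᴴ * B i := by
  obtain ⟨W, hWW, hWW', hWB⟩ := exists_submatrix_eq_of_conjTranspose_mul_self_eq_one
    (V := stack B) (by rw [conjTranspose_stack_mul_stack, hB]) hf hcard
  refine ⟨fun i => Wᴴ * blockProj i * W, isPVM_blockProj.conj hWW hWW', fun i => ?_⟩
  rw [submatrix_mul _ _ _ id _ Function.bijective_id,
    submatrix_mul _ _ _ id _ Function.bijective_id, submatrix_id_id, ← conjTranspose_submatrix,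
    hWB, conjTranspose_stack_mul_blockProj_mul_stack]

open scoped MatrixOrder in
theorem transpose_sqrt [RCLike 𝕜] [Fintype n] [DecidableEq n] {E : Matrix n n 𝕜}
    (hE : E.PosSemidef) : (CFC.sqrt E)ᵀ = CFC.sqrt Eᵀ := by
  have hS : (CFC.sqrt E).PosSemidef := nonneg_iff_posSemidef.mp (CFC.sqrt_nonneg E)
  refine ((CFC.sqrt_eq_iff _ _ hE.transpose.nonneg hS.transpose.nonneg).mpr ?_).symm
  rw [← transpose_mul, CFC.sqrt_mul_sqrt_self E hE.nonneg]

theorem map_re_map_ofReal {A : Matrix m n ℂ} (hA : Aᴴ = Aᵀ) :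
    (A.map Complex.re).map Complex.ofRealHom = A := by
  ext a b
  simpa [← Complex.conj_eq_iff_re] using congrFun (congrFun hA b) a

open scoped MatrixOrder in
theorem PosSemidef.exists_real_transpose_mul_self_eq [Fintype n] [DecidableEq n]
    {E : Matrix n n ℂ} (hE : E.PosSemidef) (hEt : Eᵀ = E) :
    ∃ B : Matrix n n ℝ, (Bᵀ * B).map Complex.ofRealHom = E := by
  set S := CFC.sqrt E
  have hSt : Sᵀ = S := by rw [transpose_sqrt hE, hEt]
  have hSh : Sᴴ = S := (nonneg_iff_posSemidef.mp (CFC.sqrt_nonneg E)).isHermitian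
  refine ⟨S.map Complex.re, ?_⟩
  rw [Matrix.map_mul, transpose_map, map_re_map_ofReal (hSh.trans hSt.symm), hSt,
    CFC.sqrt_mul_sqrt_self E hE.nonneg]

end Matrix

theorem stmt12 {D C : ℕ} (E : Fin C → Matrix (Fin D) (Fin D) ℂ)
    (hEpsd : ∀ i, (E i).PosSemidef) (hEsum : ∑ i, E i = 1)
    (hEsymm : ∀ i, (E i)ᵀ = E i) :
    ∃ (D' : ℕ) (hDD' : D ≤ D') (Q : Fin C → Matrix (Fin D') (Fin D') ℂ),
      (∀ i, (Q i)ᴴ = Q i) ∧ (∀ i, (Q i)ᵀ = Q i) ∧ (∀ i, Q i * Q i = Q i) ∧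
      (∀ i j, i ≠ j → Q i * Q j = 0) ∧ (∑ i, Q i = 1) ∧
      (∀ (i : Fin C) (a b : Fin D),
        Q i (Fin.castLE hDD' a) (Fin.castLE hDD' b) = E i a b) := by
  choose B hB using fun i => (hEpsd i).exists_real_transpose_mul_self_eq (hEsymm i)
  have hBsum : ∑ i, (B i)ᴴ * B i = 1 := by
    apply Matrix.map_injective (f := Complex.ofRealHom) Complex.ofReal_injective
    change Complex.ofRealHom.mapMatrix _ = Complex.ofRealHom.mapMatrix _
    simp_rw [map_sum, map_one, RingHom.mapMatrix_apply,
      Matrix.conjTranspose_eq_transpose_of_trivial, hB, hEsum]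
  have hDD' : D ≤ C * D := by
    simpa using Matrix.card_le_card_of_conjTranspose_mul_self_eq_one
      (by rw [Matrix.conjTranspose_stack_mul_stack, hBsum] : (Matrix.stack B)ᴴ * Matrix.stack B = 1)
  obtain ⟨Q, hQ, hQB⟩ :=
    Matrix.exists_isPVM_submatrix_eq B hBsum (Fin.castLE_injective hDD') (by simp)
  have hQℂ := hQ.map Complex.ofRealHom fun x => (Complex.conj_ofReal x).symm
  refine ⟨C * D, hDD', _, hQℂ.conjTranspose_eq, fun i => ?_, hQℂ.mul_self, hQℂ.mul_eq_zero,
    hQℂ.sum_eq_one, fun i a b => ?_⟩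
  · rw [← Matrix.transpose_map, ← Matrix.conjTranspose_eq_transpose_of_trivial,
      hQ.conjTranspose_eq]
  · rw [← hB i, ← Matrix.conjTranspose_eq_transpose_of_trivial, ← hQB i]
    rfl
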